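/- arXiv:math/9802094 — 3 statements merged into one kernel-verified Lean document; each statement's English description precedes it below -/
import Mathlib

section
/- Let n ≥ 2, let Fₙ be the free group on x₁, ..., xₙ, let r = x₁²x₂²···xₙ², and let R be the normal closure of r in Fₙ. Then the endomorphism φ of Fₙ determined by φ(x₁) = x₁·(x₁⁻²r⁻¹x₁²) = x₁⁻¹·xₙ⁻²·xₙ₋₁⁻²···x₂⁻² and φ(xᵢ) = xᵢ for i ≠ 1 is an automorphism of Fₙ; it is not an inner automorphism; it satisfies φ(R) = R; and it induces the identity automorphism of Fₙ/R, i.e., w⁻¹·φ(w) ∈ R for every w ∈ Fₙ. -/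
/-!
Write r = x₁² t with t a word in x₂, …, xₙ. Then φ is x₁ ↦ x₁⁻¹ t⁻¹, with inverse x₁ ↦ t⁻¹ x₁⁻¹.
On each generator φ agrees with the identity modulo R, hence on all of Fₙ, and for a surjective
endomorphism this alone forces φ(R) = R. Finally φ is not inner because it sends the exponent
sum of x₁ from 1 to -1.
-/

/-- The word r = x₁²x₂²⋯xₙ² in the free group of rank n. -/
def rNonor (n : ℕ) : FreeGroup (Fin n) :=
  (List.ofFn fun i : Fin n => FreeGroup.of i ^ 2).prod

namespace Subgroup

variable {G : Type*} [Group G]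

theorem map_eq_self_of_surjective_of_forall_inv_mul_mem {φ : G →* G}
    (hφ : Function.Surjective φ) {N : Subgroup G} (hN : ∀ w, w⁻¹ * φ w ∈ N) :
    N.map φ = N := by
  apply le_antisymm
  · rintro _ ⟨x, hx, rfl⟩
    simpa using mul_mem hx (hN x)
  · intro x hx
    obtain ⟨y, rfl⟩ := hφ x
    have hy : y⁻¹ ∈ N := by simpa using mul_mem (hN y) (inv_mem hx)
    exact ⟨y, inv_mem_iff.mp hy, rfl⟩

end Subgroup

namespace FreeGroup

variable {α : Type*}

theorem forall_inv_mul_mem_of_forall_of {φ : FreeGroup α →* FreeGroup α}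
    {N : Subgroup (FreeGroup α)} [N.Normal] (h : ∀ i, (of i)⁻¹ * φ (of i) ∈ N) (w : FreeGroup α) :
    w⁻¹ * φ w ∈ N := by
  have hφ : (QuotientGroup.mk' N).comp φ = QuotientGroup.mk' N :=
    ext_hom _ _ fun i => (QuotientGroup.eq.mpr (h i)).symm
  exact QuotientGroup.eq.mp (DFunLike.congr_fun hφ w).symm

theorem eq_of_mem_closure_compl {H : Type*} [Group H] {a : α} {f g : FreeGroup α →* H}
    (hfg : ∀ i ≠ a, f (of i) = g (of i)) {t : FreeGroup α}
    (ht : t ∈ Subgroup.closure (of '' {a}ᶜ)) : f t = g t := by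
  refine MonoidHom.eqOn_closure ?_ ht
  rintro _ ⟨i, hi, rfl⟩
  exact hfg i hi

section

variable [DecidableEq α] {a : α} {t : FreeGroup α} {φ : FreeGroup α →* FreeGroup α}

theorem bijective_of_map_of_eq_inv_mul (ht : t ∈ Subgroup.closure (of '' {a}ᶜ))
    (hφa : φ (of a) = (of a)⁻¹ * t⁻¹) (hφi : ∀ i ≠ a, φ (of i) = of i) :
    Function.Bijective φ := by
  set ψ : FreeGroup α →* FreeGroup α := lift (Function.update of a (t⁻¹ * (of a)⁻¹))
  have hψa : ψ (of a) = t⁻¹ * (of a)⁻¹ := by simp [ψ]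
  have hψi : ∀ i ≠ a, ψ (of i) = of i := fun i hi => by simp [ψ, Function.update_of_ne hi]
  have hφt : φ t = t := eq_of_mem_closure_compl (g := MonoidHom.id _) hφi ht
  have hψt : ψ t = t := eq_of_mem_closure_compl (g := MonoidHom.id _) hψi ht
  have hψφ : ψ.comp φ = MonoidHom.id _ := ext_hom _ _ fun i => by
    rcases eq_or_ne i a with rfl | hi
    · simp [hφa, hψa, hψt]
    · simp [hφi i hi, hψi i hi]
  have hφψ : φ.comp ψ = MonoidHom.id _ := ext_hom _ _ fun i => by
    rcases eq_or_ne i a with rfl | hi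
    · simp [hφa, hψa, hφt]
    · simp [hφi i hi, hψi i hi]
  exact Function.bijective_iff_has_inverse.mpr
    ⟨ψ, DFunLike.congr_fun hψφ, DFunLike.congr_fun hφψ⟩

theorem not_exists_conj_of_map_of_eq_inv_mul (ht : t ∈ Subgroup.closure (of '' {a}ᶜ))
    (hφa : φ (of a) = (of a)⁻¹ * t⁻¹) : ¬ ∃ g, ∀ w, φ w = g * w * g⁻¹ := by
  rintro ⟨g, hg⟩
  set χ : FreeGroup α →* Multiplicative ℤ := lift (Pi.mulSingle a (Multiplicative.ofAdd 1))
  have hχt : χ t = 1 :=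
    eq_of_mem_closure_compl (g := 1) (fun i hi => by simp [χ, Pi.mulSingle_eq_of_ne hi]) ht
  have h := congrArg χ ((hg (of a)).symm.trans hφa)
  simp only [_root_.map_mul, _root_.map_inv, mul_inv_cancel_comm, hχt, inv_one, mul_one, χ,
    lift_apply_of, Pi.mulSingle_eq_same] at h
  exact absurd h (by decide)

end

end FreeGroup

open FreeGroup

theorem rNonor_eq_sq_mul (n : ℕ) (hn : 0 < n) :
    ∃ t ∈ Subgroup.closure (of '' {(⟨0, hn⟩ : Fin n)}ᶜ), rNonor n = of ⟨0, hn⟩ ^ 2 * t := by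
  obtain ⟨m, rfl⟩ : ∃ m, n = m + 1 := ⟨n - 1, by omega⟩
  refine ⟨(List.ofFn fun i : Fin m => of i.succ ^ 2).prod, list_prod_mem ?_, ?_⟩
  · simp only [List.mem_ofFn]
    rintro _ ⟨i, rfl⟩
    refine pow_mem (Subgroup.subset_closure (Set.mem_image_of_mem of ?_)) 2
    simp [Fin.ext_iff]
  · rw [rNonor, List.ofFn_succ, List.prod_cons]; rfl

/-- for n ≥ 2, r = x₁²x₂²⋯xₙ² and R the normal closure of r, the
endomorphism φ of Fₙ with φ(x₁) = x₁·(x₁⁻²r⁻¹x₁²) and φ(xᵢ) = xᵢ for i ≠ 1 is a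
non-inner automorphism of Fₙ which stabilizes R and induces the identity
automorphism of Fₙ/R. -/
theorem stmt6 (n : ℕ) (hn : 2 ≤ n)
    (φ : FreeGroup (Fin n) →* FreeGroup (Fin n))
    (hφ1 : φ (FreeGroup.of ⟨0, by omega⟩) =
      FreeGroup.of ⟨0, by omega⟩ *
        ((FreeGroup.of (⟨0, by omega⟩ : Fin n)) ^ 2)⁻¹ * (rNonor n)⁻¹ *
        (FreeGroup.of (⟨0, by omega⟩ : Fin n)) ^ 2)
    (hφi : ∀ i : Fin n, i ≠ ⟨0, by omega⟩ → φ (FreeGroup.of i) = FreeGroup.of i) :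
    Function.Bijective φ ∧
    (¬ ∃ g : FreeGroup (Fin n), ∀ w : FreeGroup (Fin n), φ w = g * w * g⁻¹) ∧
    Subgroup.map φ (Subgroup.normalClosure {rNonor n}) =
      Subgroup.normalClosure {rNonor n} ∧
    (∀ w : FreeGroup (Fin n), w⁻¹ * φ w ∈ Subgroup.normalClosure {rNonor n}) := by
  obtain ⟨t, ht, hr⟩ := rNonor_eq_sq_mul n (by omega)
  have hφa : φ (of ⟨0, by omega⟩) = (of ⟨0, by omega⟩)⁻¹ * t⁻¹ := by rw [hφ1, hr]; group
  have hbij : Function.Bijective φ := bijective_of_map_of_eq_inv_mul ht hφa hφi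
  have hφR : ∀ w, w⁻¹ * φ w ∈ Subgroup.normalClosure {rNonor n} := by
    refine forall_inv_mul_mem_of_forall_of fun i => ?_
    rcases eq_or_ne i ⟨0, by omega⟩ with rfl | hi
    · have hconj := Subgroup.normalClosure_normal.conj_mem _
        (inv_mem (Subgroup.subset_normalClosure (Set.mem_singleton (rNonor n))))
        (of (⟨0, by omega⟩ : Fin n) ^ 2)⁻¹
      simpa [hφ1, mul_assoc] using hconj
    · simp [hφi i hi]
  exact ⟨hbij, not_exists_conj_of_map_of_eq_inv_mul ht hφa,
    Subgroup.map_eq_self_of_surjective_of_forall_inv_mul_mem hbij.2 hφR, hφR⟩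
end

section
/- Let m ≥ 2, let n = 2m, let Fₙ be the free group on x₁, ..., xₙ, let r = [x₁, x₂]·[x₃, x₄]···[x₂ₘ₋₁, x₂ₘ] (where [x, y] = x⁻¹y⁻¹xy), and let R be the normal closure of r in Fₙ. Then the endomorphism φₒ of Fₙ determined by φₒ(x₁) = x₁·r = x₂⁻¹x₁x₂·[x₃, x₄]···[x₂ₘ₋₁, x₂ₘ] and φₒ(xᵢ) = xᵢ for i ≠ 1 is an automorphism of Fₙ; it is not an inner automorphism; it satisfies φₒ(R) = R; and it induces the identity automorphism of Fₙ/R, i.e., w⁻¹·φₒ(w) ∈ R for every w ∈ Fₙ. -/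
/-- The word r = [x₁,x₂]·[x₃,x₄]⋯[x₂ₘ₋₁,x₂ₘ] (with [x,y] = x⁻¹y⁻¹xy) in the free
group of rank n = 2m. -/
def rOrient (m : ℕ) : FreeGroup (Fin (2 * m)) :=
  (List.ofFn fun k : Fin m =>
    (FreeGroup.of (⟨2 * k.1, by have := k.2; omega⟩ : Fin (2 * m)))⁻¹ *
    (FreeGroup.of (⟨2 * k.1 + 1, by have := k.2; omega⟩ : Fin (2 * m)))⁻¹ *
    FreeGroup.of (⟨2 * k.1, by have := k.2; omega⟩ : Fin (2 * m)) *
    FreeGroup.of (⟨2 * k.1 + 1, by have := k.2; omega⟩ : Fin (2 * m))).prod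

private lemma ofFn_prod_single {G : Type*} [Monoid G] :
    ∀ {n : ℕ} (f : Fin n → G) (j : Fin n), (∀ k, k ≠ j → f k = 1) →
      (List.ofFn f).prod = f j
  | 0, _, j, _ => j.elim0
  | n+1, f, j, h => by
    rw [List.ofFn_succ, List.prod_cons]
    cases j using Fin.cases with
    | zero =>
      have : (List.ofFn (fun k : Fin n => f k.succ)).prod = 1 := by
        apply List.prod_eq_one
        intro x hx
        simp only [List.mem_ofFn] at hx
        obtain ⟨k, rfl⟩ := hx
        exact h _ (Fin.succ_ne_zero k)
      simp [this]
    | succ j' =>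
      rw [h 0 (Fin.succ_ne_zero j').symm, one_mul]
      · exact ofFn_prod_single (fun k => f k.succ) j'
          (fun k hk => h _ (fun e => hk (Fin.succ_injective _ e)))

private def sTail (m : ℕ) : FreeGroup (Fin (2 * m)) :=
  (List.ofFn fun k : Fin m =>
    if k.1 = 0 then 1 else
    (FreeGroup.of (⟨2 * k.1, by have := k.2; omega⟩ : Fin (2 * m)))⁻¹ *
    (FreeGroup.of (⟨2 * k.1 + 1, by have := k.2; omega⟩ : Fin (2 * m)))⁻¹ *
    FreeGroup.of (⟨2 * k.1, by have := k.2; omega⟩ : Fin (2 * m)) *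
    FreeGroup.of (⟨2 * k.1 + 1, by have := k.2; omega⟩ : Fin (2 * m))).prod

private lemma rsplit (M : ℕ) :
    rOrient (M + 1) =
      (FreeGroup.of (⟨0, by omega⟩ : Fin (2 * (M+1))))⁻¹ *
      (FreeGroup.of (⟨1, by omega⟩ : Fin (2 * (M+1))))⁻¹ *
      FreeGroup.of (⟨0, by omega⟩ : Fin (2 * (M+1))) *
      FreeGroup.of (⟨1, by omega⟩ : Fin (2 * (M+1))) * sTail (M + 1) := by
  rw [rOrient, sTail, List.ofFn_succ, List.ofFn_succ, List.prod_cons, List.prod_cons]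
  simp only [Fin.val_zero, Fin.val_succ, if_pos rfl, one_mul, mul_assoc]
  norm_num

private lemma fixTail {m : ℕ} (hm : 1 ≤ m)
    (θ : FreeGroup (Fin (2 * m)) →* FreeGroup (Fin (2 * m)))
    (hθ : ∀ i : Fin (2 * m), i ≠ ⟨0, by omega⟩ → θ (FreeGroup.of i) = FreeGroup.of i) :
    θ (sTail m) = sTail m := by
  rw [sTail, map_list_prod, List.map_ofFn]
  congr 1
  refine congrArg List.ofFn (funext fun k => ?_)
  rcases Nat.eq_zero_or_pos k.1 with h0 | h1
  · simp [Function.comp, h0]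
  · have h2 : (⟨2 * k.1, by have := k.2; omega⟩ : Fin (2 * m)) ≠ ⟨0, by omega⟩ :=
      Fin.ne_of_val_ne (show 2 * k.1 ≠ 0 by omega)
    have h3 : (⟨2 * k.1 + 1, by have := k.2; omega⟩ : Fin (2 * m)) ≠ ⟨0, by omega⟩ :=
      Fin.ne_of_val_ne (show 2 * k.1 + 1 ≠ 0 by omega)
    have hk0 : ¬ (k.1 = 0) := by omega
    rw [Function.comp_apply, if_neg hk0, map_mul, map_mul, map_mul,
      map_inv, map_inv, hθ _ h2, hθ _ h3]

/-- for m ≥ 2, n = 2m, r = [x₁,x₂]·[x₃,x₄]⋯[x₂ₘ₋₁,x₂ₘ] and R the normal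
closure of r, the endomorphism φₒ of Fₙ with φₒ(x₁) = x₁·r and φₒ(xᵢ) = xᵢ for
i ≠ 1 is a non-inner automorphism of Fₙ which stabilizes R and induces the identity
automorphism of Fₙ/R. -/
theorem stmt7 (m : ℕ) (hm : 2 ≤ m)
    (φ : FreeGroup (Fin (2 * m)) →* FreeGroup (Fin (2 * m)))
    (hφ1 : φ (FreeGroup.of ⟨0, by omega⟩) =
      FreeGroup.of (⟨0, by omega⟩ : Fin (2 * m)) * rOrient m)
    (hφi : ∀ i : Fin (2 * m), i ≠ ⟨0, by omega⟩ → φ (FreeGroup.of i) = FreeGroup.of i) :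
    Function.Bijective φ ∧
    (¬ ∃ g : FreeGroup (Fin (2 * m)), ∀ w : FreeGroup (Fin (2 * m)), φ w = g * w * g⁻¹) ∧
    Subgroup.map φ (Subgroup.normalClosure {rOrient m}) =
      Subgroup.normalClosure {rOrient m} ∧
    (∀ w : FreeGroup (Fin (2 * m)),
      w⁻¹ * φ w ∈ Subgroup.normalClosure {rOrient m}) := by
  obtain ⟨M, rfl⟩ : ∃ M, m = M + 2 := ⟨m - 2, by omega⟩
  set R := Subgroup.normalClosure {rOrient (M + 2)} with hR
  have h2m0 : (0 : ℕ) < 2 * (M + 2) := by omega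
  have h2m1 : (1 : ℕ) < 2 * (M + 2) := by omega
  set xa : FreeGroup (Fin (2 * (M + 2))) := FreeGroup.of ⟨0, h2m0⟩ with hxa
  set xb : FreeGroup (Fin (2 * (M + 2))) := FreeGroup.of ⟨1, h2m1⟩ with hxb
  have hne1 : (⟨1, h2m1⟩ : Fin (2 * (M + 2))) ≠ ⟨0, h2m0⟩ :=
    Fin.ne_of_val_ne one_ne_zero
  set ψ : FreeGroup (Fin (2 * (M + 2))) →* FreeGroup (Fin (2 * (M + 2))) :=
    FreeGroup.lift (fun i => if i = (⟨0, h2m0⟩ : Fin (2 * (M + 2))) then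
      xb * xa * (sTail (M + 2))⁻¹ * xb⁻¹ else FreeGroup.of i) with hψdef
  have hψ0 : ψ (FreeGroup.of ⟨0, h2m0⟩) = xb * xa * (sTail (M + 2))⁻¹ * xb⁻¹ := by
    rw [hψdef, FreeGroup.lift_apply_of, if_pos rfl]
  have hψi : ∀ i : Fin (2 * (M + 2)), i ≠ ⟨0, h2m0⟩ → ψ (FreeGroup.of i) = FreeGroup.of i := by
    intro i hi
    rw [hψdef, FreeGroup.lift_apply_of, if_neg hi]
  have hφs : φ (sTail (M + 2)) = sTail (M + 2) := fixTail (by omega) φ hφi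
  have hψs : ψ (sTail (M + 2)) = sTail (M + 2) := fixTail (by omega) ψ hψi
  have hr : rOrient (M + 2) = xa⁻¹ * xb⁻¹ * xa * xb * sTail (M + 2) := rsplit (M + 1)
  have hφb : φ xb = xb := hφi _ hne1
  have hψb : ψ xb = xb := hψi _ hne1
  -- compositions
  have hco1 : ∀ x, φ (ψ x) = x := by
    have : φ.comp ψ = MonoidHom.id _ := by
      apply FreeGroup.ext_hom
      intro i
      by_cases hi : i = ⟨0, h2m0⟩
      · subst hi
        rw [MonoidHom.comp_apply, MonoidHom.id_apply, hψ0]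
        simp only [map_mul, map_inv]
        rw [hφ1, hφb, hφs, hr, ← hxa]
        group
      · rw [MonoidHom.comp_apply, MonoidHom.id_apply, hψi i hi, hφi i hi]
    intro x
    exact DFunLike.congr_fun this x
  have hco2 : ∀ x, ψ (φ x) = x := by
    have : ψ.comp φ = MonoidHom.id _ := by
      apply FreeGroup.ext_hom
      intro i
      by_cases hi : i = ⟨0, h2m0⟩
      · subst hi
        rw [MonoidHom.comp_apply, MonoidHom.id_apply, hφ1, hr]
        simp only [map_mul, map_inv]
        rw [hxa, hψ0, hψb, hψs, ← hxa]
        group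
      · rw [MonoidHom.comp_apply, MonoidHom.id_apply, hφi i hi, hψi i hi]
    intro x
    exact DFunLike.congr_fun this x
  have hbij : Function.Bijective φ :=
    ⟨Function.LeftInverse.injective hco2, Function.RightInverse.surjective hco1⟩
  -- membership in R
  have hrR : rOrient (M + 2) ∈ R := Subgroup.subset_normalClosure (Set.mem_singleton _)
  have hNorm : R.Normal := Subgroup.normalClosure_normal
  have hdiff : ∀ (θ : FreeGroup (Fin (2 * (M + 2))) →* FreeGroup (Fin (2 * (M + 2)))),
      (∀ i : Fin (2 * (M + 2)), i ≠ ⟨0, h2m0⟩ → θ (FreeGroup.of i) = FreeGroup.of i) →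
      ((FreeGroup.of (⟨0, h2m0⟩ : Fin (2 * (M + 2))))⁻¹ * θ (FreeGroup.of ⟨0, h2m0⟩) ∈ R) →
      ∀ w, w⁻¹ * θ w ∈ R := by
    intro θ hθi hθ0 w
    induction w using FreeGroup.induction_on with
    | C1 => simpa using one_mem R
    | of i =>
      show (FreeGroup.of i)⁻¹ * θ (FreeGroup.of i) ∈ R
      by_cases hi : i = ⟨0, h2m0⟩
      · subst hi; exact hθ0
      · rw [hθi i hi, inv_mul_cancel]; exact one_mem R
    | inv_of i ih =>
      show ((FreeGroup.of i)⁻¹)⁻¹ * θ ((FreeGroup.of i)⁻¹) ∈ R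
      have ih' : (FreeGroup.of i)⁻¹ * θ (FreeGroup.of i) ∈ R := ih
      have h2 : FreeGroup.of i * ((FreeGroup.of i)⁻¹ * θ (FreeGroup.of i))⁻¹ *
          (FreeGroup.of i)⁻¹ ∈ R := hNorm.conj_mem _ (inv_mem ih') _
      have he : ((FreeGroup.of i)⁻¹)⁻¹ * θ ((FreeGroup.of i)⁻¹) =
          FreeGroup.of i * ((FreeGroup.of i)⁻¹ * θ (FreeGroup.of i))⁻¹ *
          (FreeGroup.of i)⁻¹ := by
        rw [map_inv]; group
      rw [he]; exact h2
    | mul u v ihu ihv =>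
      have h2 : v⁻¹ * (u⁻¹ * θ u) * v⁻¹⁻¹ ∈ R := hNorm.conj_mem _ ihu v⁻¹
      have h3 := mul_mem h2 ihv
      have he : (u * v)⁻¹ * θ (u * v) =
          v⁻¹ * (u⁻¹ * θ u) * v⁻¹⁻¹ * (v⁻¹ * θ v) := by
        rw [map_mul]; group
      rw [he]; exact h3
  have hφ0R : (FreeGroup.of (⟨0, h2m0⟩ : Fin (2 * (M + 2))))⁻¹ *
      φ (FreeGroup.of ⟨0, h2m0⟩) ∈ R := by
    rw [hφ1]
    have he : xa⁻¹ * (xa * rOrient (M + 2)) = rOrient (M + 2) := by group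
    rw [← hxa, he]; exact hrR
  have hψ0R : (FreeGroup.of (⟨0, h2m0⟩ : Fin (2 * (M + 2))))⁻¹ *
      ψ (FreeGroup.of ⟨0, h2m0⟩) ∈ R := by
    rw [hψ0, ← hxa]
    have he : xa⁻¹ * (xb * xa * (sTail (M + 2))⁻¹ * xb⁻¹) =
        (xa⁻¹ * xb * xa) * (rOrient (M + 2))⁻¹ * (xa⁻¹ * xb * xa)⁻¹ := by
      rw [hr]; group
    rw [he]; exact hNorm.conj_mem _ (inv_mem hrR) _
  have hφmem : ∀ w, w⁻¹ * φ w ∈ R := hdiff φ hφi hφ0R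
  have hψmem : ∀ w, w⁻¹ * ψ w ∈ R := hdiff ψ hψi hψ0R
  -- non-inner via S₃
  have hnotinner : ¬ ∃ g : FreeGroup (Fin (2 * (M + 2))),
      ∀ w, φ w = g * w * g⁻¹ := by
    rintro ⟨g, hg⟩
    set σ : Equiv.Perm (Fin 3) := finRotate 3 with hσ
    set τ : Equiv.Perm (Fin 3) := Equiv.swap 0 1 with hτ
    set ρ : FreeGroup (Fin (2 * (M + 2))) →* Equiv.Perm (Fin 3) :=
      FreeGroup.lift (fun i => if i.1 = 2 then σ else if i.1 = 3 then τ else 1) with hρdef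
    have hρ0 : ρ (FreeGroup.of (⟨0, h2m0⟩ : Fin (2 * (M + 2)))) = 1 := by
      rw [hρdef, FreeGroup.lift_apply_of]; norm_num
    have hρr : ρ (rOrient (M + 2)) = σ⁻¹ * τ⁻¹ * σ * τ := by
      rw [rOrient, map_list_prod, List.map_ofFn]
      rw [ofFn_prod_single _ (⟨1, by omega⟩ : Fin (M + 2)) ?side]
      case side =>
        intro k hk
        have hk1 : k.1 ≠ 1 := fun h => hk (Fin.ext h)
        have e1 : ¬ (2 * k.1 = 2) := by omega
        have e2 : ¬ (2 * k.1 = 3) := by omega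
        have e3 : ¬ (2 * k.1 + 1 = 2) := by omega
        have e4 : ¬ (2 * k.1 + 1 = 3) := by omega
        rw [Function.comp_apply, map_mul, map_mul, map_mul, map_inv, map_inv,
          hρdef, FreeGroup.lift_apply_of, FreeGroup.lift_apply_of]
        rw [if_neg e1, if_neg e2, if_neg e3, if_neg e4]
        simp
      · rw [Function.comp_apply, map_mul, map_mul, map_mul, map_inv, map_inv,
          hρdef, FreeGroup.lift_apply_of, FreeGroup.lift_apply_of]
        norm_num
    have h1 := hg (FreeGroup.of ⟨0, h2m0⟩)
    rw [hφ1] at h1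
    have h2 := congrArg ρ h1
    rw [map_mul, map_mul, map_mul, map_inv, hρ0, hρr, one_mul, mul_one] at h2
    have : σ⁻¹ * τ⁻¹ * σ * τ = 1 := by
      rw [h2]; group
    rw [hσ, hτ] at this
    exact absurd this (by decide)
  refine ⟨hbij, hnotinner, ?_, hφmem⟩
  apply le_antisymm
  · rintro x ⟨y, hy, rfl⟩
    have he : φ y = y * (y⁻¹ * φ y) := by group
    rw [he]; exact mul_mem hy (hφmem y)
  · intro x hx
    refine ⟨ψ x, ?_, hco1 x⟩
    have he : ψ x = x * (x⁻¹ * ψ x) := by group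
    rw [he]; exact mul_mem hx (hψmem x)
end

section
/- Let n ≥ 3, let Fₙ be the free group on x₁, ..., xₙ, let r = x₁²x₂²···xₙ², and let R be the normal closure of r in Fₙ. Let φ be the automorphism of Fₙ with φ(x₁) = x₁⁻¹·xₙ⁻²···x₂⁻² and φ(xᵢ) = xᵢ for i ≠ 1, and let ψ be the automorphism with ψ(x₁) = (x₁⁻²r⁻¹x₁²)·x₁·(xₙ⁻²r⁻¹xₙ²)·(x₁⁻²rx₁²), ψ(xₙ) = (x₁⁻²r⁻¹x₁²)·xₙ·(x₁⁻²rx₁²), and ψ(xᵢ) = xᵢ for i ≠ 1, n. Then the commutator φ∘ψ∘φ⁻¹∘ψ⁻¹ is not an inner automorphism of Fₙ induced by an element of R; in particular, the quotient group Ker(ρ)/Inn_R is non-abelian, where ρ: Stab(R) → Aut(Fₙ/R) is the natural homomorphism. -/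
set_option maxHeartbeats 1000000


open Pointwise

/-- The subgroup of `Aut F` of automorphisms stabilizing `R` (setwise). -/
def Stab {F : Type*} [Group F] (R : Subgroup F) : Subgroup (MulAut F) :=
  MulAction.stabilizer (MulAut F) R

/-- The subgroup of `Aut F` of inner automorphisms induced by elements of `R`. -/
def InnR {F : Type*} [Group F] (R : Subgroup F) : Subgroup (MulAut F) where
  carrier := {φ | ∃ s ∈ R, φ = MulAut.conj s}
  one_mem' := ⟨1, R.one_mem, by simp⟩
  mul_mem' := by
    rintro _ _ ⟨s, hs, rfl⟩ ⟨t, ht, rfl⟩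
    exact ⟨s * t, R.mul_mem hs ht, by simp [map_mul]⟩
  inv_mem' := by
    rintro _ ⟨s, hs, rfl⟩
    exact ⟨s⁻¹, R.inv_mem hs, by simp⟩

/-- The kernel of the natural homomorphism ρ : Stab(R) → Aut(F/R): automorphisms of
`F` stabilizing `R` and inducing the identity automorphism of `F/R`. -/
def KerRho {F : Type*} [Group F] (R : Subgroup F) : Set (MulAut F) :=
  {φ | φ ∈ Stab R ∧ ∀ x : F, x⁻¹ * φ x ∈ R}

private lemma list_aux' {β : Type*} : ∀ (L : List β) (x : β), L ++ [x] = x :: L → ∀ y ∈ L, y = x := by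
  intro L x
  induction L with
  | nil => intro _ y hy; simp at hy
  | cons a L ih =>
    intro h y hy
    rw [List.cons_append, List.cons.injEq] at h
    obtain ⟨rfl, h2⟩ := h
    rcases hy with _ | hy
    · rfl
    · exact ih h2 y (by assumption)

private lemma red_eq_of_length' {α : Type*} {L₁ L₂ : List (α × Bool)}
    (h : FreeGroup.Red L₁ L₂) (hl : L₁.length = L₂.length) : L₁ = L₂ := by
  rcases Relation.ReflTransGen.cases_head h with heq | ⟨c, hstep, hred⟩
  · exact heq
  · have l1 := FreeGroup.Red.Step.length hstep
    have l2 := FreeGroup.Red.length_le hred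
    omega

/-- An element of a free group commuting with a generator is a power of that generator. -/
private lemma commute_gen' {α : Type*} [DecidableEq α] (i : α) :
    ∀ (w : FreeGroup α), w * FreeGroup.of i = FreeGroup.of i * w →
      ∃ k : ℤ, w = FreeGroup.of i ^ k := by
  open FreeGroup in
  intro w
  generalize hN : w.toWord.length = N
  induction N using Nat.strong_induction_on generalizing w with
  | _ N ih =>
  intro hc
  have hofmk : FreeGroup.of i = FreeGroup.mk [(i, true)] := rfl
  have hofmk' : (FreeGroup.of i)⁻¹ = FreeGroup.mk [(i, false)] := by
    rw [hofmk, inv_mk]; rfl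
  cases hL : w.toWord with
  | nil =>
    exact ⟨0, by simpa using FreeGroup.toWord_eq_nil_iff.mp hL⟩
  | cons x L' =>
    obtain ⟨j, b⟩ := x
    have hredL : reduce w.toWord = w.toWord := reduce_toWord w
    by_cases hji : j = i
    · subst hji
      cases b with
      | true =>
        have hw' : ((FreeGroup.of j)⁻¹ * w).toWord = L' := by
          conv_lhs => rw [← mk_toWord (x := w), hofmk', mul_mk]
          rw [toWord_mk, List.singleton_append, reduce.cons, hredL, hL]
          simp
        have hc' : ((FreeGroup.of j)⁻¹ * w) * FreeGroup.of j
            = FreeGroup.of j * ((FreeGroup.of j)⁻¹ * w) := by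
          rw [mul_assoc, hc]; group
        have hlen : L'.length < N := by rw [← hN, hL]; simp
        obtain ⟨k, hk⟩ := ih L'.length hlen _ (by rw [hw']) hc'
        refine ⟨k + 1, ?_⟩
        have hww : w = FreeGroup.of j * ((FreeGroup.of j)⁻¹ * w) := by group
        rw [hww, hk]; group
      | false =>
        have hw' : (FreeGroup.of j * w).toWord = L' := by
          conv_lhs => rw [← mk_toWord (x := w), hofmk, mul_mk]
          rw [toWord_mk, List.singleton_append, reduce.cons, hredL, hL]
          simp
        have hc' : (FreeGroup.of j * w) * FreeGroup.of j
            = FreeGroup.of j * (FreeGroup.of j * w) := by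
          rw [mul_assoc, hc]
        have hlen : L'.length < N := by rw [← hN, hL]; simp
        obtain ⟨k, hk⟩ := ih L'.length hlen _ (by rw [hw']) hc'
        refine ⟨k - 1, ?_⟩
        have hww : w = (FreeGroup.of j)⁻¹ * (FreeGroup.of j * w) := by group
        rw [hww, hk]; group
    · exfalso
      have h1 : (FreeGroup.of i * w).toWord = (i, true) :: w.toWord := by
        conv_lhs => rw [← mk_toWord (x := w), hofmk, mul_mk]
        rw [toWord_mk, List.singleton_append, reduce.cons, hredL, hL]
        have hcond : ¬(i = j ∧ (true = !b)) := fun h => hji h.1.symm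
        show (if i = j ∧ true = !b then L' else (i, true) :: (j, b) :: L') = (i, true) :: (j, b) :: L'
        rw [if_neg hcond]
      have h2 : (w * FreeGroup.of i).toWord = reduce (w.toWord ++ [(i, true)]) := by
        conv_lhs => rw [← mk_toWord (x := w), hofmk, mul_mk, toWord_mk]
      have h3 : reduce (w.toWord ++ [(i, true)]) = (i, true) :: w.toWord := by
        rw [← h2, hc, h1]
      have hred : Red (w.toWord ++ [(i, true)]) ((i, true) :: w.toWord) := by
        rw [← h3]; exact reduce.red
      have heq : w.toWord ++ [(i, true)] = (i, true) :: w.toWord :=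
        red_eq_of_length' hred (by simp)
      have := list_aux' _ _ heq (j, b) (by rw [hL]; simp)
      exact hji (by simpa using congrArg Prod.fst this)

private lemma conj_mem'' {F : Type*} [Group F] (R : Subgroup F) [hn : R.Normal] (g x : F)
    (hx : x ∈ R) : g * x * g⁻¹ ∈ R := hn.conj_mem x hx g

private lemma mem_kerRho_of_gen' {α : Type*} (R : Subgroup (FreeGroup α)) [R.Normal]
    (φ : MulAut (FreeGroup α)) (h : ∀ i, (FreeGroup.of i)⁻¹ * φ (FreeGroup.of i) ∈ R) :
    φ ∈ KerRho R := by
  have hall : ∀ x, x⁻¹ * φ x ∈ R := by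
    intro x
    induction x using FreeGroup.induction_on with
    | C1 => simpa using R.one_mem
    | of i => exact h i
    | inv_of i ihx =>
      have ihx' : (FreeGroup.of i)⁻¹ * φ (FreeGroup.of i) ∈ R := ihx
      have h1 := R.inv_mem ihx'
      have h2 := conj_mem'' R (FreeGroup.of i) _ h1
      show ((FreeGroup.of i)⁻¹)⁻¹ * φ ((FreeGroup.of i)⁻¹) ∈ R
      convert h2 using 1
      rw [map_inv]
      group
    | mul x y ihx ihy =>
      have h2 := conj_mem'' R y⁻¹ _ ihx
      have h3 := R.mul_mem h2 ihy
      convert h3 using 1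
      rw [map_mul]
      group
  constructor
  · rw [Stab, MulAction.mem_stabilizer_iff]
    ext x
    rw [Subgroup.mem_pointwise_smul_iff_inv_smul_mem]
    have hsm : φ⁻¹ • x = φ⁻¹ x := rfl
    rw [hsm]
    constructor
    · intro hx
      have h4 := hall (φ⁻¹ x)
      rw [MulAut.apply_inv_self] at h4
      have h5 := R.mul_mem hx h4
      convert h5 using 1
      group
    · intro hx
      have h4 := hall (φ⁻¹ x)
      rw [MulAut.apply_inv_self] at h4
      have h5 := R.mul_mem hx (R.inv_mem h4)
      convert h5 using 1
      group
  · exact hall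

private lemma lift_rNonor' {G : Type*} [Group G] (k : ℕ) (f : Fin (k + 3) → G) :
    (FreeGroup.lift f) (rNonor (k + 3)) = (List.ofFn fun i => f i ^ 2).prod := by
  rw [rNonor, map_list_prod, List.map_ofFn]
  refine congrArg List.prod (congrArg List.ofFn (funext fun i => ?_))
  simp [Function.comp]

private lemma prod_ofFn_front' {M : Type*} [Monoid M] {k : ℕ} (g : Fin (k + 3) → M)
    (h0 : ∀ i : Fin (k + 3), 2 ≤ (i : ℕ) → g i = 1) :
    (List.ofFn g).prod = g ⟨0, by omega⟩ * g ⟨1, by omega⟩ := by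
  rw [List.ofFn_succ, List.prod_cons, List.ofFn_succ, List.prod_cons]
  have htail : (List.ofFn fun i : Fin (k + 1) => g i.succ.succ).prod = 1 := by
    apply List.prod_eq_one
    intro y hy
    rw [List.mem_ofFn] at hy
    obtain ⟨i, rfl⟩ := hy
    have hlt := i.isLt
    apply h0
    simp only [Fin.val_succ]
    omega
  rw [htail, mul_one]
  rw [show (0 : Fin (k + 3)) = ⟨0, by omega⟩ from by ext; simp,
    show ((0 : Fin (k + 2)).succ : Fin (k + 3)) = ⟨1, by omega⟩ from by ext; simp]

private lemma prod_ofFn_ends' {M : Type*} [Monoid M] {k : ℕ} (g : Fin (k + 3) → M)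
    (h0 : ∀ i : Fin (k + 3), (i : ℕ) ≠ 0 → (i : ℕ) ≠ k + 2 → g i = 1) :
    (List.ofFn g).prod = g ⟨0, by omega⟩ * g ⟨k + 2, by omega⟩ := by
  rw [List.ofFn_succ, List.prod_cons, List.ofFn_succ', List.prod_concat]
  have htail : (List.ofFn fun i : Fin (k + 1) => g (i.castSucc).succ).prod = 1 := by
    apply List.prod_eq_one
    intro y hy
    rw [List.mem_ofFn] at hy
    obtain ⟨i, rfl⟩ := hy
    have hlt := i.isLt
    apply h0
    · simp
    · simp only [Fin.val_succ, Fin.coe_castSucc]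
      omega
  rw [htail, one_mul]
  rw [show (0 : Fin (k + 3)) = ⟨0, by omega⟩ from by ext; simp,
    show ((Fin.last (k + 1)).succ : Fin (k + 3)) = ⟨k + 2, by omega⟩ from by ext; simp]

/-- for n ≥ 3, r = x₁²x₂²⋯xₙ², R the normal closure of r, and the
automorphisms φ (with φ(x₁) = x₁⁻¹xₙ⁻²⋯x₂⁻² = x₁⁻¹·r⁻¹·x₁², φ(xᵢ) = xᵢ for i ≠ 1)
and ψ (with ψ(x₁) = (x₁⁻²r⁻¹x₁²)·x₁·(xₙ⁻²r⁻¹xₙ²)·(x₁⁻²rx₁²),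
ψ(xₙ) = (x₁⁻²r⁻¹x₁²)·xₙ·(x₁⁻²rx₁²), ψ(xᵢ) = xᵢ for i ≠ 1, n), the commutator
φ∘ψ∘φ⁻¹∘ψ⁻¹ is not an inner automorphism induced by an element of R; in particular
Ker(ρ)/Inn_R is non-abelian. -/
theorem stmt10 (n : ℕ) (hn : 3 ≤ n)
    (φ ψ : MulAut (FreeGroup (Fin n)))
    (hφ1 : φ (FreeGroup.of ⟨0, by omega⟩) =
      (FreeGroup.of (⟨0, by omega⟩ : Fin n))⁻¹ * (rNonor n)⁻¹ *
        (FreeGroup.of (⟨0, by omega⟩ : Fin n)) ^ 2)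
    (hφi : ∀ i : Fin n, i ≠ ⟨0, by omega⟩ → φ (FreeGroup.of i) = FreeGroup.of i)
    (hψ1 : ψ (FreeGroup.of ⟨0, by omega⟩) =
      (((FreeGroup.of (⟨0, by omega⟩ : Fin n)) ^ 2)⁻¹ * (rNonor n)⁻¹ *
          (FreeGroup.of (⟨0, by omega⟩ : Fin n)) ^ 2) *
        FreeGroup.of (⟨0, by omega⟩ : Fin n) *
        (((FreeGroup.of (⟨n - 1, by omega⟩ : Fin n)) ^ 2)⁻¹ * (rNonor n)⁻¹ *
          (FreeGroup.of (⟨n - 1, by omega⟩ : Fin n)) ^ 2) *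
        (((FreeGroup.of (⟨0, by omega⟩ : Fin n)) ^ 2)⁻¹ * rNonor n *
          (FreeGroup.of (⟨0, by omega⟩ : Fin n)) ^ 2))
    (hψn : ψ (FreeGroup.of ⟨n - 1, by omega⟩) =
      (((FreeGroup.of (⟨0, by omega⟩ : Fin n)) ^ 2)⁻¹ * (rNonor n)⁻¹ *
          (FreeGroup.of (⟨0, by omega⟩ : Fin n)) ^ 2) *
        FreeGroup.of (⟨n - 1, by omega⟩ : Fin n) *
        (((FreeGroup.of (⟨0, by omega⟩ : Fin n)) ^ 2)⁻¹ * rNonor n *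
          (FreeGroup.of (⟨0, by omega⟩ : Fin n)) ^ 2))
    (hψi : ∀ i : Fin n, i ≠ ⟨0, by omega⟩ → i ≠ ⟨n - 1, by omega⟩ →
      ψ (FreeGroup.of i) = FreeGroup.of i) :
    φ * ψ * φ⁻¹ * ψ⁻¹ ∉ InnR (Subgroup.normalClosure {rNonor n}) ∧
    ∃ α β : MulAut (FreeGroup (Fin n)),
      α ∈ KerRho (Subgroup.normalClosure {rNonor n}) ∧
      β ∈ KerRho (Subgroup.normalClosure {rNonor n}) ∧
      α * β * α⁻¹ * β⁻¹ ∉ InnR (Subgroup.normalClosure {rNonor n}) := by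
  obtain ⟨k, rfl⟩ : ∃ k, n = k + 3 := ⟨n - 3, by omega⟩
  set R := Subgroup.normalClosure {rNonor (k + 3)} with hR
  have hrmem : rNonor (k + 3) ∈ R := Subgroup.subset_normalClosure (Set.mem_singleton _)
  have hconjR : ∀ g : FreeGroup (Fin (k + 3)), g⁻¹ * (rNonor (k + 3))⁻¹ * g ∈ R := by
    intro g
    have h5 := conj_mem'' R g⁻¹ _ (R.inv_mem hrmem)
    convert h5 using 1
    group
  have hconjR2 : ∀ g : FreeGroup (Fin (k + 3)), g⁻¹ * rNonor (k + 3) * g ∈ R := by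
    intro g
    have h5 := conj_mem'' R g⁻¹ _ hrmem
    convert h5 using 1
    group
  -- fixed generators
  have hne1 : (⟨1, by omega⟩ : Fin (k + 3)) ≠ ⟨0, by omega⟩ :=
    Fin.ne_of_val_ne (show (1 : ℕ) ≠ 0 by omega)
  have hne2 : (⟨1, by omega⟩ : Fin (k + 3)) ≠ ⟨k + 3 - 1, by omega⟩ :=
    Fin.ne_of_val_ne (show (1 : ℕ) ≠ k + 3 - 1 by omega)
  have hneT : (⟨k + 3 - 1, by omega⟩ : Fin (k + 3)) ≠ ⟨0, by omega⟩ :=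
    Fin.ne_of_val_ne (show k + 3 - 1 ≠ (0 : ℕ) by omega)
  have hφ2 : φ (FreeGroup.of ⟨1, by omega⟩) = FreeGroup.of ⟨1, by omega⟩ := hφi _ hne1
  have hψ2 : ψ (FreeGroup.of ⟨1, by omega⟩) = FreeGroup.of ⟨1, by omega⟩ := hψi _ hne1 hne2
  have hφt : φ (FreeGroup.of ⟨k + 3 - 1, by omega⟩) = FreeGroup.of ⟨k + 3 - 1, by omega⟩ :=
    hφi _ hneT
  have hφ2' : φ⁻¹ (FreeGroup.of ⟨1, by omega⟩) = FreeGroup.of ⟨1, by omega⟩ := by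
    rw [MulAut.inv_def, MulEquiv.symm_apply_eq]; exact hφ2.symm
  have hψ2' : ψ⁻¹ (FreeGroup.of ⟨1, by omega⟩) = FreeGroup.of ⟨1, by omega⟩ := by
    rw [MulAut.inv_def, MulEquiv.symm_apply_eq]; exact hψ2.symm
  -- decomposition of r and φ(r)
  have h00 : (0 : Fin (k + 3)) = ⟨0, by omega⟩ := by ext; simp
  have hofn : rNonor (k + 3) = FreeGroup.of (⟨0, by omega⟩ : Fin (k + 3)) ^ 2 *
      (List.ofFn fun i : Fin (k + 2) => FreeGroup.of i.succ ^ 2).prod := by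
    rw [rNonor, List.ofFn_succ, List.prod_cons, h00]
  have hφm : φ ((List.ofFn fun i : Fin (k + 2) => FreeGroup.of i.succ ^ 2).prod) =
      (List.ofFn fun i : Fin (k + 2) => FreeGroup.of i.succ ^ 2).prod := by
    rw [map_list_prod, List.map_ofFn]
    have hfun : (⇑φ ∘ fun i : Fin (k + 2) => FreeGroup.of i.succ ^ 2) =
        fun i : Fin (k + 2) => FreeGroup.of i.succ ^ 2 := by
      funext i
      simp only [Function.comp_apply, map_pow]
      rw [hφi i.succ (Fin.ne_of_val_ne (by simp))]
    rw [hfun]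
  have hφr : φ (rNonor (k + 3)) = (FreeGroup.of (⟨0, by omega⟩ : Fin (k + 3)))⁻¹ *
      (rNonor (k + 3))⁻¹ * FreeGroup.of (⟨0, by omega⟩ : Fin (k + 3)) := by
    have hm : (List.ofFn fun i : Fin (k + 2) => FreeGroup.of i.succ ^ 2).prod =
        (FreeGroup.of (⟨0, by omega⟩ : Fin (k + 3)) ^ 2)⁻¹ * rNonor (k + 3) := by
      rw [hofn]; group
    conv_lhs => rw [hofn]
    rw [map_mul, map_pow, hφ1, hφm, hm, pow_two]
    group
  -- main nonmembership
  have hmain : φ * ψ * φ⁻¹ * ψ⁻¹ ∉ InnR R := by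
    rintro ⟨s, hs, hconj⟩
    have hcx2 : s * FreeGroup.of ⟨1, by omega⟩ * s⁻¹ = FreeGroup.of ⟨1, by omega⟩ := by
      have h0 : (φ * ψ * φ⁻¹ * ψ⁻¹) (FreeGroup.of ⟨1, by omega⟩) =
          FreeGroup.of ⟨1, by omega⟩ := by
        rw [MulAut.mul_apply, MulAut.mul_apply, MulAut.mul_apply, hψ2', hφ2', hψ2, hφ2]
      rw [hconj, MulAut.conj_apply] at h0
      exact h0
    have hsc : s * FreeGroup.of ⟨1, by omega⟩ = FreeGroup.of ⟨1, by omega⟩ * s := by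
      have h1 := congrArg (· * s) hcx2
      simpa [mul_assoc] using h1
    obtain ⟨kk, rfl⟩ := commute_gen' _ s hsc
    -- abelianization: kk = 0
    have hkk : kk = 0 := by
      set fA : Fin (k + 3) → Multiplicative (ℤ × ℤ) := fun i =>
        if (i : ℕ) = 0 then Multiplicative.ofAdd ((1, 0) : ℤ × ℤ)
        else if (i : ℕ) = 1 then Multiplicative.ofAdd ((0, 1) : ℤ × ℤ) else 1 with hfA
      have habr : (FreeGroup.lift fA) (rNonor (k + 3)) = Multiplicative.ofAdd ((2, 2) : ℤ × ℤ) := by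
        rw [lift_rNonor']
        rw [prod_ofFn_front' _ (fun i hi => by
          simp only [hfA]
          rw [if_neg (by omega), if_neg (by omega), one_pow])]
        simp only [hfA]
        norm_num
        rw [pow_two, pow_two, ← ofAdd_add, ← ofAdd_add, ← ofAdd_add]
        decide
      have hle : R ≤ Subgroup.comap (FreeGroup.lift fA) (Subgroup.zpowers
          (Multiplicative.ofAdd ((2, 2) : ℤ × ℤ))) := by
        rw [hR]
        apply Subgroup.normalClosure_le_normal
        intro x hx
        rw [Set.mem_singleton_iff] at hx
        subst hx
        rw [SetLike.mem_coe, Subgroup.mem_comap, habr]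
        exact Subgroup.mem_zpowers _
      have habs := hle hs
      rw [Subgroup.mem_comap] at habs
      obtain ⟨m, hm⟩ := Subgroup.mem_zpowers_iff.mp habs
      have habk : (FreeGroup.lift fA) (FreeGroup.of (⟨1, by omega⟩ : Fin (k + 3)) ^ kk) =
          Multiplicative.ofAdd ((0, 1) : ℤ × ℤ) ^ kk := by
        rw [map_zpow, FreeGroup.lift_apply_of]
        simp only [hfA]
        norm_num
      rw [habk, ← ofAdd_zsmul, ← ofAdd_zsmul] at hm
      have h6 : m • ((2, 2) : ℤ × ℤ) = kk • ((0, 1) : ℤ × ℤ) :=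
        Multiplicative.ofAdd.injective hm
      simp only [Prod.smul_mk, smul_eq_mul, Prod.mk.injEq] at h6
      omega
    subst hkk
    rw [zpow_zero] at hconj
    have hc1 : φ * ψ * φ⁻¹ * ψ⁻¹ = 1 := by rw [hconj]; exact map_one MulAut.conj
    have hcomm2 : φ * ψ = ψ * φ := mul_inv_eq_one.mp (by rw [mul_inv_rev, ← mul_assoc]; exact hc1)
    have he : φ (ψ (FreeGroup.of ⟨k + 3 - 1, by omega⟩)) =
        ψ (φ (FreeGroup.of ⟨k + 3 - 1, by omega⟩)) := by
      rw [← MulAut.mul_apply, ← MulAut.mul_apply, hcomm2]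
    rw [hφt, hψn] at he
    simp only [map_mul, map_inv, map_pow, hφ1, hφr, hφt] at he
    -- push to FreeGroup Bool
    set fB : Fin (k + 3) → FreeGroup Bool := fun i =>
      if (i : ℕ) = 0 then FreeGroup.of false
      else if (i : ℕ) = k + 2 then FreeGroup.of true else 1 with hfB
    have hfB0 : fB ⟨0, by omega⟩ = FreeGroup.of false := by
      simp only [hfB]
      rw [if_pos trivial]
    have hfBT : fB ⟨k + 3 - 1, by omega⟩ = FreeGroup.of true := by
      simp only [hfB]
      rw [if_neg (by omega), if_pos (by omega)]
    have hhA : (FreeGroup.lift fB) (FreeGroup.of (⟨0, by omega⟩ : Fin (k + 3))) =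
        FreeGroup.of false := by rw [FreeGroup.lift_apply_of, hfB0]
    have hhT : (FreeGroup.lift fB) (FreeGroup.of (⟨k + 3 - 1, by omega⟩ : Fin (k + 3))) =
        FreeGroup.of true := by rw [FreeGroup.lift_apply_of, hfBT]
    have hhr : (FreeGroup.lift fB) (rNonor (k + 3)) =
        FreeGroup.of false ^ 2 * FreeGroup.of true ^ 2 := by
      rw [lift_rNonor']
      rw [prod_ofFn_ends' _ (fun i hi1 hi2 => by
        simp only [hfB]
        rw [if_neg hi1, if_neg hi2, one_pow])]
      have hidx : (⟨k + 2, by omega⟩ : Fin (k + 3)) = ⟨k + 3 - 1, by omega⟩ :=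
        Fin.ext (show k + 2 = k + 3 - 1 by omega)
      have hfBT' : fB ⟨k + 2, by omega⟩ = FreeGroup.of true := by
        rw [hidx]; exact hfBT
      rw [hfB0, hfBT']
    have he2 := congrArg (FreeGroup.lift fB) he
    simp only [map_mul, map_inv, map_pow, hhA, hhT, hhr] at he2
    exact absurd he2 (by decide)
  -- KerRho memberships
  have hφK : φ ∈ KerRho R := by
    apply mem_kerRho_of_gen'
    intro i
    by_cases h0 : i = ⟨0, by omega⟩
    · subst h0
      rw [hφ1]
      have h5 := hconjR (FreeGroup.of (⟨0, by omega⟩ : Fin (k + 3)) ^ 2)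
      convert h5 using 1
      group
    · rw [hφi i h0]
      simpa using R.one_mem
  have hψK : ψ ∈ KerRho R := by
    apply mem_kerRho_of_gen'
    intro i
    by_cases h0 : i = ⟨0, by omega⟩
    · subst h0
      rw [hψ1]
      have h5 := R.mul_mem (R.mul_mem
        (conj_mem'' R (FreeGroup.of (⟨0, by omega⟩ : Fin (k + 3)))⁻¹ _
          (hconjR (FreeGroup.of (⟨0, by omega⟩ : Fin (k + 3)) ^ 2)))
        (hconjR (FreeGroup.of (⟨k + 3 - 1, by omega⟩ : Fin (k + 3)) ^ 2)))
        (hconjR2 (FreeGroup.of (⟨0, by omega⟩ : Fin (k + 3)) ^ 2))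
      convert h5 using 1
      group
    · by_cases h1 : i = ⟨k + 3 - 1, by omega⟩
      · subst h1
        rw [hψn]
        have h5 := R.mul_mem
          (conj_mem'' R (FreeGroup.of (⟨k + 3 - 1, by omega⟩ : Fin (k + 3)))⁻¹ _
            (hconjR (FreeGroup.of (⟨0, by omega⟩ : Fin (k + 3)) ^ 2)))
          (hconjR2 (FreeGroup.of (⟨0, by omega⟩ : Fin (k + 3)) ^ 2))
        convert h5 using 1
        group
      · rw [hψi i h0 h1]
        simpa using R.one_mem
  exact ⟨hmain, φ, ψ, hφK, hψK, hmain⟩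
end
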